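/- arXiv:2006.12158 — 3 statements merged into one kernel-verified Lean document; each statement's English description precedes it below -/
import Mathlib

section
/- Let I ⊆ ℝ be an open interval, ŝ₀ ∈ I, and let H₀ be a complex symmetric n×n matrix with Im H₀ positive definite. Then the Riccati equation (d/ds)H(s) + H(s) C H(s) + D(s) = 0 has exactly one differentiable solution H : I → ℂ^{n×n} with H(ŝ₀) = H₀; moreover, for every s ∈ I the matrix H(s) is symmetric and Im H(s) is positive definite. -/
/-!
Write `H = B A⁻¹`, where `(A, B)` solves the linear Hamiltonian system `A' = C B`, `B' = -D A`
with `A(ŝ₀) = 1`, `B(ŝ₀) = H₀`; being linear, this system has a solution on all of `I`.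
Since `C` and `D` are real symmetric, `Aᴴ B - Bᴴ A` is constant, equal to
`H₀ - H₀ᴴ = 2i Im H₀`. A vector in the kernel of `A` would be isotropic for this positive
definite form, so `A` stays invertible on `I`, and `H = B A⁻¹` solves the Riccati equation.
The same identity gives `Im H = (A⁻¹)ᴴ (Im H₀) A⁻¹`, once `H` is known to be symmetric; and it
is, because `Hᵀ` solves the same equation with the same initial value. Uniqueness holds because
the difference of two solutions solves a linear equation.
-/

open Matrix

attribute [local instance] Matrix.normedAddCommGroup Matrix.normedSpace

/-- The constant `n × n` matrix `C` with `C₁₁ = 0`, `C_jj = 2` for `j = 2, …, n`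
and `C_jk = 0` off the diagonal (indices in `Fin n`, where `0 : Fin n`
corresponds to the index `1`). -/
def riccatiC (n : ℕ) : Matrix (Fin n) (Fin n) ℂ :=
  Matrix.of fun j k => if j = k ∧ (j : ℕ) ≠ 0 then 2 else 0

/-- `H` is a differentiable solution of the Riccati equation
`(d/ds) H + H C H + D = 0` on the set `I`. -/
def IsRiccatiSol (n : ℕ) (I : Set ℝ) (D : ℝ → Matrix (Fin n) (Fin n) ℝ)
    (H : ℝ → Matrix (Fin n) (Fin n) ℂ) : Prop :=
  ∀ s ∈ I, HasDerivAt H (-(H s * riccatiC n * H s + (D s).map (fun x => (x : ℂ)))) s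

open Set Filter Topology Metric
open scoped NNReal ComplexOrder

section LinearODE

variable {E : Type*} [NormedAddCommGroup E] [NormedSpace ℝ E]
  {M : ℝ → E →L[ℝ] E} {J J' : Set ℝ} {y z : ℝ → E} {t : ℝ}

def IsLinearSolOn (M : ℝ → E →L[ℝ] E) (J : Set ℝ) (y : ℝ → E) : Prop :=
  ∀ t ∈ J, HasDerivAt y (M t (y t)) t

namespace IsLinearSolOn

lemma mono (hy : IsLinearSolOn M J y) (h : J' ⊆ J) : IsLinearSolOn M J' y :=
  fun t ht => hy t (h ht)

lemma union (hJ : IsLinearSolOn M J y) (hJ' : IsLinearSolOn M J' y) :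
    IsLinearSolOn M (J ∪ J') y := fun t ht => ht.elim (hJ t) (hJ' t)

lemma sub (hy : IsLinearSolOn M J y) (hz : IsLinearSolOn M J z) :
    IsLinearSolOn M J (y - z) :=
  fun t ht => ((hy t ht).sub (hz t ht)).congr_deriv (map_sub _ _ _).symm

lemma congr (hJ : IsOpen J) (hy : IsLinearSolOn M J y) (h : EqOn z y J) :
    IsLinearSolOn M J z := fun t ht => by
  simpa only [h ht] using
    (hy t ht).congr_of_eventuallyEq (eventuallyEq_of_mem (hJ.mem_nhds ht) h)

lemma eventuallyEq_zero (hy : IsLinearSolOn M J y) (hJ : J ∈ 𝓝 t) (hM : ContinuousAt M t)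
    (ht : y t = 0) : y =ᶠ[𝓝 t] 0 := by
  have hK : ∀ᶠ u in 𝓝 t, LipschitzOnWith (‖M t‖₊ + 1) (M u) univ := by
    filter_upwards [hM.eventually (ball_mem_nhds _ one_pos)] with u hu
    refine ((M u).lipschitz.weaken ?_).lipschitzOnWith
    rw [dist_eq_norm] at hu
    rw [← NNReal.coe_le_coe]
    push_cast
    linarith [norm_le_norm_add_norm_sub' (M u) (M t)]
  exact ODE_solution_unique_of_eventually (v := fun u x => M u x) hK
    (eventually_of_mem hJ fun u hu => ⟨hy u hu, trivial⟩)
    (Eventually.of_forall fun u =>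
      ⟨(hasDerivAt_const u 0).congr_deriv (map_zero _).symm, trivial⟩) ht

lemma eqOn_zero (hJ : IsOpen J) (hJc : IsPreconnected J) (hM : ContinuousOn M J)
    (hy : IsLinearSolOn M J y) {t₀ : ℝ} (ht₀ : t₀ ∈ J) (hy₀ : y t₀ = 0) : EqOn y 0 J := by
  intro t ht
  refine (hJc.induction₂ (fun a b => y a = 0 ↔ y b = 0) (fun a ha => ?_)
    (fun _ _ _ _ _ _ h₁ h₂ => h₁.trans h₂) (fun _ _ _ _ h => h.symm) ht₀ ht).1 hy₀
  by_cases hya : y a = 0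
  · filter_upwards [nhdsWithin_le_nhds <|
      hy.eventuallyEq_zero (hJ.mem_nhds ha) (hM.continuousAt (hJ.mem_nhds ha)) hya]
      with u hu using by simp [hya, hu]
  · filter_upwards [nhdsWithin_le_nhds ((hy a ha).continuousAt.eventually_ne hya)]
      with u hu using by simp [hya, hu]

lemma eqOn (hJ : IsOpen J) (hJc : IsPreconnected J) (hM : ContinuousOn M J)
    (hy : IsLinearSolOn M J y) (hz : IsLinearSolOn M J z) {t₀ : ℝ} (ht₀ : t₀ ∈ J)
    (h : y t₀ = z t₀) : EqOn y z J := fun _ ht =>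
  sub_eq_zero.1 <| (hy.sub hz).eqOn_zero hJ hJc hM ht₀ (sub_eq_zero.2 h) ht

lemma eqOn_inter (hJ : IsOpen J) (hJc : J.OrdConnected) (hJ' : IsOpen J') (hJ'c : J'.OrdConnected)
    (hM : ContinuousOn M J) (hy : IsLinearSolOn M J y) (hz : IsLinearSolOn M J' z) {t₀ : ℝ}
    (ht₀ : t₀ ∈ J ∩ J') (h : y t₀ = z t₀) : EqOn y z (J ∩ J') :=
  eqOn (hJ.inter hJ') (hJc.inter hJ'c).isPreconnected (hM.mono inter_subset_left)
    (hy.mono inter_subset_left) (hz.mono inter_subset_right) ht₀ h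

lemma extend (hJ : IsOpen J) (hJc : J.OrdConnected) (hM : ContinuousOn M J)
    (hy : IsLinearSolOn M J y) {U : Set ℝ} (hU : IsOpen U) (hUc : U.OrdConnected)
    (hloc : ∀ c ∈ U, ∀ x, ∃ z, z c = x ∧ IsLinearSolOn M U z) {c : ℝ} (hc : c ∈ J ∩ U) :
    ∃ w, EqOn w y J ∧ IsLinearSolOn M (J ∪ U) w := by
  classical
  obtain ⟨z, hzc, hz⟩ := hloc c hc.2 (y c)
  have hyz := eqOn_inter hJ hJc hU hUc hM hy hz hc hzc.symm
  have hwy : EqOn (U.piecewise z y) y J := fun u hu => by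
    by_cases h : u ∈ U
    · simp [h, hyz ⟨hu, h⟩]
    · simp [h]
  exact ⟨U.piecewise z y, hwy, (hy.congr hJ hwy).union (hz.congr hU (piecewise_eqOn _ _ _))⟩

end IsLinearSolOn

variable [CompleteSpace E]

lemma exists_isLinearSolOn_ball {I : Set ℝ} (hI : IsOpen I) (hM : ContinuousOn M I)
    (ht : t ∈ I) : ∃ ε > 0, ball t ε ⊆ I ∧
      ∀ c ∈ ball t ε, ∀ x, ∃ y, y c = x ∧ IsLinearSolOn M (ball t ε) y := by
  obtain ⟨δ, hδ, hδI⟩ := nhds_basis_closedBall.mem_iff.1 (hI.mem_nhds ht)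
  obtain ⟨C, hC⟩ := (isCompact_closedBall t δ).exists_bound_of_continuousOn (hM.mono hδI)
  set K : ℝ≥0 := C.toNNReal
  have hK : ∀ u ∈ closedBall t δ, ‖M u‖₊ ≤ K := fun u hu => by
    rw [← norm_toNNReal]; exact Real.toNNReal_mono (hC u hu)
  set ε := min (δ / 3) (1 / (4 * (K + 1)))
  have hε : 0 < ε := lt_min (by positivity) (by positivity)
  have hεδ : ε ≤ δ / 3 := min_le_left _ _
  have hεK : 4 * K * ε ≤ 1 := by
    have h1 : ε ≤ 1 / (4 * (K + 1)) := min_le_right _ _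
    rw [le_div_iff₀ (by positivity)] at h1
    nlinarith
  refine ⟨ε, hε, (ball_subset_closedBall.trans (closedBall_subset_closedBall (by linarith))).trans
    hδI, fun c hc x => ?_⟩
  rw [mem_ball, Real.dist_eq, abs_lt] at hc
  have hsub : Icc (c - 2 * ε) (c + 2 * ε) ⊆ closedBall t δ := fun u hu => by
    rw [mem_closedBall, Real.dist_eq, abs_le]; constructor <;> linarith [hu.1, hu.2]
  -- Centred at `0` with radius `2‖x‖`, the Picard–Lindelöf time `1 / (4K)` does not depend on `x`.
  have hpl : IsPicardLindelof (fun u x => M u x)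
      (⟨c, by constructor <;> linarith⟩ : Icc (c - 2 * ε) (c + 2 * ε)) 0
      (2 * ‖x‖₊) ‖x‖₊ (K * (2 * ‖x‖₊)) K :=
    { lipschitzOnWith := fun u hu => ((M u).lipschitz.weaken (hK u (hsub hu))).lipschitzOnWith
      continuousOn := fun _ _ => (hM.mono (hsub.trans hδI)).clm_apply continuousOn_const
      norm_le := fun u hu z hz => by
        rw [mem_closedBall_zero_iff] at hz
        push_cast
        exact (M u).le_opNorm z |>.trans <|
          mul_le_mul (hK u (hsub hu)) hz (norm_nonneg _) K.coe_nonneg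
      mul_max_le := by
        push_cast
        rw [show c + 2 * ε - c = 2 * ε by ring, show c - (c - 2 * ε) = 2 * ε by ring, max_self]
        nlinarith [norm_nonneg x] }
  obtain ⟨y, hy0, hy⟩ := hpl.exists_eq_forall_mem_Icc_hasDerivWithinAt (x := x) (by simp)
  refine ⟨y, hy0, fun u hu => (hy u ?_).hasDerivAt (Icc_mem_nhds ?_ ?_)⟩ <;>
    rw [mem_ball, Real.dist_eq, abs_lt] at hu
  · constructor <;> linarith
  · linarith
  · linarith

theorem exists_isLinearSolOn {I : Set ℝ} (hI : IsOpen I) (hIc : I.OrdConnected)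
    (hM : ContinuousOn M I) {t₀ : ℝ} (ht₀ : t₀ ∈ I) (x₀ : E) :
    ∃ y, y t₀ = x₀ ∧ IsLinearSolOn M I y := by
  have hball : ∀ t ε, (ball t ε).OrdConnected := fun t ε => (convex_ball t ε).ordConnected
  set S := {t | ∃ J y, IsOpen J ∧ J.OrdConnected ∧ J ⊆ I ∧ t₀ ∈ J ∧ t ∈ J ∧ y t₀ = x₀ ∧
    IsLinearSolOn M J y}
  have hIS : I ⊆ S := by
    refine hIc.isPreconnected.subset_of_closure_inter_subset ?_ ?_ ?_
    · refine isOpen_iff_mem_nhds.2 fun t ⟨J, y, hJ, hJc, hJI, ht₀J, htJ, hy₀, hy⟩ =>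
        mem_of_superset (hJ.mem_nhds htJ) fun u hu => ⟨J, y, hJ, hJc, hJI, ht₀J, hu, hy₀, hy⟩
    · obtain ⟨ε, hε, hεI, hloc⟩ := exists_isLinearSolOn_ball hI hM ht₀
      obtain ⟨y, hy₀, hy⟩ := hloc t₀ (mem_ball_self hε) x₀
      exact ⟨t₀, ht₀, ball t₀ ε, y, isOpen_ball, hball _ _, hεI, mem_ball_self hε,
        mem_ball_self hε, hy₀, hy⟩
    · rintro t ⟨htS, ht⟩
      obtain ⟨ε, hε, hεI, hloc⟩ := exists_isLinearSolOn_ball hI hM ht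
      obtain ⟨c, ⟨J, y, hJ, hJc, hJI, ht₀J, hcJ, hy₀, hy⟩, hc⟩ := mem_closure_iff.1 htS ε hε
      rw [dist_comm] at hc
      obtain ⟨w, hwy, hw⟩ :=
        hy.extend hJ hJc (hM.mono hJI) isOpen_ball (hball t ε) hloc ⟨hcJ, hc⟩
      exact ⟨J ∪ ball t ε, w, hJ.union isOpen_ball,
        isPreconnected_iff_ordConnected.1
          (hJc.isPreconnected.union c hcJ hc (hball t ε).isPreconnected),
        union_subset hJI hεI, Or.inl ht₀J, Or.inr (mem_ball_self hε), (hwy ht₀J).trans hy₀, hw⟩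
  simp only [S, subset_def, mem_ofPred_eq] at hIS
  choose! J y hJ hJc hJI ht₀J htJ hy₀ hy using hIS
  have hglue : ∀ t ∈ I, EqOn (fun u => y u u) (y t) (J t) := fun t ht u hu =>
    have hu' : u ∈ I := hJI t ht u hu
    IsLinearSolOn.eqOn_inter (hJ u hu') (hJc u hu') (hJ t ht) (hJc t ht)
      (hM.mono (hJI u hu')) (hy u hu') (hy t ht) ⟨ht₀J u hu', ht₀J t ht⟩
      ((hy₀ u hu').trans (hy₀ t ht).symm) ⟨htJ u hu', hu⟩
  exact ⟨fun u => y u u, hy₀ t₀ ht₀,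
    fun t ht => (hy t ht).congr (hJ t ht) (hglue t ht) t (htJ t ht)⟩

end LinearODE

section MatrixCalculus

variable {m : Type*} [Fintype m] {𝕜 : Type*} [RCLike 𝕜] {f g : ℝ → Matrix m m 𝕜}
  {f' g' : Matrix m m 𝕜} {s : ℝ}

theorem HasDerivAt.matrix_transpose (hf : HasDerivAt f f' s) :
    HasDerivAt (fun u => (f u)ᵀ) f'ᵀ s :=
  hasDerivAt_pi.2 fun i => hasDerivAt_pi.2 fun j => hasDerivAt_pi.1 (hasDerivAt_pi.1 hf j) i

theorem HasDerivAt.matrix_conjTranspose (hf : HasDerivAt f f' s) :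
    HasDerivAt (fun u => (f u)ᴴ) f'ᴴ s :=
  hasDerivAt_pi.2 fun i => hasDerivAt_pi.2 fun j => (hasDerivAt_pi.1 (hasDerivAt_pi.1 hf j) i).star

variable (m 𝕜) in
noncomputable def matrixMulCLM : Matrix m m 𝕜 →L[ℝ] Matrix m m 𝕜 →L[ℝ] Matrix m m 𝕜 :=
  (LinearMap.mul ℝ (Matrix m m 𝕜)).toContinuousBilinearMap

theorem HasDerivAt.matrix_mul (hf : HasDerivAt f f' s) (hg : HasDerivAt g g' s) :
    HasDerivAt (fun u => f u * g u) (f' * g s + f s * g') s :=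
  ((matrixMulCLM m 𝕜).hasDerivAt_of_bilinear (fun _ => hf) (fun _ => hg)).congr_deriv
    (add_comm _ _)

variable [DecidableEq m]

theorem DifferentiableAt.matrix_det (hf : DifferentiableAt ℝ f s) :
    DifferentiableAt ℝ (fun u => (f u).det) s := by
  have hentry : ∀ i j, DifferentiableAt ℝ (fun u => f u i j) s := fun i j =>
    differentiableAt_pi.1 (differentiableAt_pi.1 hf i) j
  simp only [det_apply]
  fun_prop

theorem DifferentiableAt.matrix_adjugate (hf : DifferentiableAt ℝ f s) :
    DifferentiableAt ℝ (fun u => (f u).adjugate) s := by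
  refine differentiableAt_pi.2 fun i => differentiableAt_pi.2 fun j => ?_
  simp only [adjugate_apply]
  refine DifferentiableAt.matrix_det <|
    differentiableAt_pi.2 fun k => differentiableAt_pi.2 fun l => ?_
  simp only [updateRow_apply]
  split_ifs
  exacts [differentiableAt_const _, differentiableAt_pi.1 (differentiableAt_pi.1 hf k) l]

theorem DifferentiableAt.matrix_inv (hf : DifferentiableAt ℝ f s) (hdet : IsUnit (f s).det) :
    DifferentiableAt ℝ (fun u => (f u)⁻¹) s := by
  simp only [inv_def, Ring.inverse_eq_inv']
  exact (hf.matrix_det.inv hdet.ne_zero).smul hf.matrix_adjugate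

theorem HasDerivAt.matrix_inv (hf : HasDerivAt f f' s) (hdet : IsUnit (f s).det) :
    HasDerivAt (fun u => (f u)⁻¹) (-((f s)⁻¹ * f' * (f s)⁻¹)) s := by
  obtain ⟨G', hG⟩ : ∃ G', HasDerivAt (fun u => (f u)⁻¹) G' s :=
    ⟨_, (hf.differentiableAt.matrix_inv hdet).hasDerivAt⟩
  have hunit : ∀ᶠ u in 𝓝 s, f u * (f u)⁻¹ = 1 := by
    filter_upwards [hf.differentiableAt.matrix_det.continuousAt.eventually_ne hdet.ne_zero]
      with u hu using mul_nonsing_inv _ (isUnit_iff_ne_zero.2 hu)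
  have h0 : f' * (f s)⁻¹ + f s * G' = 0 :=
    (hf.matrix_mul hG).unique ((hasDerivAt_const s 1).congr_of_eventuallyEq hunit)
  refine hG.congr_deriv ?_
  calc G' = (f s)⁻¹ * (f s * G') := by
        rw [← Matrix.mul_assoc, nonsing_inv_mul _ hdet, Matrix.one_mul]
    _ = -((f s)⁻¹ * f' * (f s)⁻¹) := by
        rw [eq_neg_of_add_eq_zero_right h0, Matrix.mul_neg, Matrix.mul_assoc]

end MatrixCalculus

section ComplexMatrix

variable {m : Type*}

theorem Matrix.isHermitian_map_ofReal_iff {S : Matrix m m ℝ} :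
    (S.map ((↑) : ℝ → ℂ)).IsHermitian ↔ S.IsSymm := by
  rw [IsHermitian, ← conjTranspose_map _ fun x => (Complex.conj_ofReal x).symm,
    (map_injective Complex.ofReal_injective).eq_iff, ← IsHermitian, isHermitian_iff_isSymm]

theorem Matrix.sub_conjTranspose_of_isSymm {P : Matrix m m ℂ} (hP : P.IsSymm) :
    P - Pᴴ = (2 * Complex.I) • (P.map Complex.im).map (↑) := by
  ext i j
  simp [hP.apply i j, Complex.sub_conj, mul_comm, mul_left_comm]

variable [Fintype m]

lemma Matrix.re_star_dotProduct_map_ofReal_mulVec (S : Matrix m m ℝ) (v : m → ℂ) :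
    (star v ⬝ᵥ (S.map (↑) *ᵥ v)).re
      = (fun i => (v i).re) ⬝ᵥ (S *ᵥ fun i => (v i).re)
        + (fun i => (v i).im) ⬝ᵥ (S *ᵥ fun i => (v i).im) := by
  simp only [dotProduct, mulVec, Finset.mul_sum, Complex.re_sum, ← Finset.sum_add_distrib]
  refine Finset.sum_congr rfl fun i _ => Finset.sum_congr rfl fun j _ => ?_
  simp [Complex.mul_re, Complex.mul_im]

theorem Matrix.posDef_map_ofReal_iff {S : Matrix m m ℝ} :
    (S.map ((↑) : ℝ → ℂ)).PosDef ↔ S.PosDef := by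
  simp only [posDef_iff_dotProduct_mulVec, isHermitian_map_ofReal_iff, ← isHermitian_iff_isSymm]
  refine and_congr_right fun hS => ⟨fun h x hx => ?_, fun h v hv => ?_⟩
  · have hpos := h (x := fun i => (x i : ℂ)) fun h0 => hx <| funext fun i => by
      simpa using congrFun h0 i
    rw [Complex.lt_def, re_star_dotProduct_map_ofReal_mulVec] at hpos
    simpa using hpos.1
  · have him := IsHermitian.im_star_dotProduct_mulVec_self
      (isHermitian_map_ofReal_iff.2 (isHermitian_iff_isSymm.1 hS)) v
    rw [Complex.lt_def, re_star_dotProduct_map_ofReal_mulVec]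
    refine ⟨?_, him.symm⟩
    have hnonneg : ∀ x : m → ℝ, 0 ≤ x ⬝ᵥ (S *ᵥ x) := fun x => by
      rcases eq_or_ne x 0 with rfl | hx
      · simp
      · simpa using (h hx).le
    have hpos : ∀ x : m → ℝ, x ≠ 0 → 0 < x ⬝ᵥ (S *ᵥ x) := fun x hx => by simpa using h hx
    by_cases hre : (fun i => (v i).re) = 0
    · have him : (fun i => (v i).im) ≠ 0 := fun h0 =>
        hv <| funext fun i => Complex.ext (congrFun hre i) (congrFun h0 i)
      simpa using add_pos_of_nonneg_of_pos (hnonneg _) (hpos _ him)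
    · simpa using add_pos_of_pos_of_nonneg (hpos _ hre) (hnonneg _)

variable [DecidableEq m]

theorem Matrix.mul_inv_sub_conjTranspose {A : Matrix m m ℂ} (B : Matrix m m ℂ)
    (hA : IsUnit A.det) : B * A⁻¹ - (B * A⁻¹)ᴴ = (A⁻¹)ᴴ * (Aᴴ * B - Bᴴ * A) * A⁻¹ := by
  rw [conjTranspose_mul, conjTranspose_nonsing_inv, Matrix.mul_sub, Matrix.sub_mul,
    ← Matrix.mul_assoc, nonsing_inv_mul _ (by rwa [det_conjTranspose, isUnit_star]),
    Matrix.one_mul, Matrix.mul_assoc, Matrix.mul_assoc, mul_nonsing_inv _ hA, Matrix.mul_one]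

theorem Matrix.isUnit_det_of_conjTranspose_mul_sub {A B P : Matrix m m ℂ} {c : ℂ}
    (hW : Aᴴ * B - Bᴴ * A = c • P) (hc : c ≠ 0) (hP : P.PosDef) : IsUnit A.det := by
  rw [isUnit_iff_ne_zero]
  intro hdet
  obtain ⟨v, hv, hAv⟩ := exists_mulVec_eq_zero_iff.2 hdet
  have h0 : star v ⬝ᵥ ((Aᴴ * B - Bᴴ * A) *ᵥ v) = 0 := by
    simp [sub_mulVec, ← mulVec_mulVec, hAv, dotProduct_mulVec, ← star_mulVec]
  rw [hW, smul_mulVec, dotProduct_smul, smul_eq_mul] at h0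
  exact mul_ne_zero hc (hP.dotProduct_mulVec_pos hv).ne' h0

theorem Matrix.posDef_map_im_mul_inv {A B : Matrix m m ℂ} {S : Matrix m m ℝ}
    (hA : IsUnit A.det) (hsymm : (B * A⁻¹).IsSymm)
    (hW : Aᴴ * B - Bᴴ * A = (2 * Complex.I) • S.map (↑)) (hS : S.PosDef) :
    ((B * A⁻¹).map Complex.im).PosDef := by
  rw [← posDef_map_ofReal_iff]
  have h : (2 * Complex.I) • ((B * A⁻¹).map Complex.im).map (↑)
      = (2 * Complex.I) • ((A⁻¹)ᴴ * S.map (↑) * A⁻¹) := by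
    rw [← sub_conjTranspose_of_isSymm hsymm, mul_inv_sub_conjTranspose B hA, hW,
      Matrix.mul_smul, Matrix.smul_mul]
  rw [smul_right_injective _ (by simp) h]
  exact (posDef_map_ofReal_iff.2 hS).conjTranspose_mul_mul_same
    (mulVec_injective_iff_isUnit.2 ((isUnit_iff_isUnit_det _).2 (isUnit_nonsing_inv_det A hA)))

end ComplexMatrix

section Riccati

variable {m : Type*} [Fintype m] {I : Set ℝ} {C : Matrix m m ℂ}

def IsRiccatiSolOn (C : Matrix m m ℂ) (D : ℝ → Matrix m m ℝ) (I : Set ℝ)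
    (H : ℝ → Matrix m m ℂ) : Prop :=
  ∀ s ∈ I, HasDerivAt H (-(H s * C * H s + (D s).map (fun x => (x : ℂ)))) s

variable {D : ℝ → Matrix m m ℝ} {H H₁ H₂ : ℝ → Matrix m m ℂ}

theorem IsRiccatiSolOn.eqOn (hI : IsOpen I) (hIc : IsPreconnected I)
    (h₁ : IsRiccatiSolOn C D I H₁) (h₂ : IsRiccatiSolOn C D I H₂) {s₀ : ℝ} (hs₀ : s₀ ∈ I)
    (h : H₁ s₀ = H₂ s₀) : EqOn H₁ H₂ I := by
  set M := fun s => LinearMap.toContinuousLinearMap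
    (-(LinearMap.mulLeft ℝ (H₁ s * C) + LinearMap.mulRight ℝ (C * H₂ s)))
  have hc₁ : ContinuousOn H₁ I := fun s hs => (h₁ s hs).continuousAt.continuousWithinAt
  have hc₂ : ContinuousOn H₂ I := fun s hs => (h₂ s hs).continuousAt.continuousWithinAt
  have hM : ContinuousOn M I := continuousOn_clm_apply.2 fun E =>
    (by fun_prop : ContinuousOn (fun s => -(H₁ s * C * E + E * (C * H₂ s))) I)
  have hsol : IsLinearSolOn M I (H₁ - H₂) := fun s hs =>
    ((h₁ s hs).sub (h₂ s hs)).congr_deriv <| by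
      change _ = -(H₁ s * C * (H₁ s - H₂ s) + (H₁ s - H₂ s) * (C * H₂ s))
      noncomm_ring
  exact fun s hs => sub_eq_zero.1 (hsol.eqOn_zero hI hIc hM hs₀ (sub_eq_zero.2 h) hs)

theorem IsRiccatiSolOn.transpose (hC : C.IsSymm) (hD : ∀ s ∈ I, (D s).IsSymm)
    (h : IsRiccatiSolOn C D I H) : IsRiccatiSolOn C D I (fun s => (H s)ᵀ) := fun s hs =>
  (h s hs).matrix_transpose.congr_deriv <| by
    simp [transpose_mul, hC.eq, ← transpose_map, (hD s hs).eq, Matrix.mul_assoc]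

theorem conjTranspose_mul_sub_eq_of_hamiltonian {A B P : ℝ → Matrix m m ℂ} (hI : IsOpen I)
    (hIc : IsPreconnected I) (hC : C.IsHermitian) (hP : ∀ s ∈ I, (P s).IsHermitian)
    (hAB : ∀ s ∈ I, HasDerivAt A (C * B s) s ∧ HasDerivAt B (-P s * A s) s)
    {s s₀ : ℝ} (hs : s ∈ I) (hs₀ : s₀ ∈ I) :
    (A s)ᴴ * B s - (B s)ᴴ * A s = (A s₀)ᴴ * B s₀ - (B s₀)ᴴ * A s₀ := by
  have hW : ∀ u ∈ I, HasDerivAt (fun u => (A u)ᴴ * B u - (B u)ᴴ * A u) 0 u := fun u hu => by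
    obtain ⟨hA, hB⟩ := hAB u hu
    refine ((hA.matrix_conjTranspose.matrix_mul hB).fun_sub
      (hB.matrix_conjTranspose.matrix_mul hA)).congr_deriv ?_
    simp only [conjTranspose_mul, conjTranspose_neg, hC.eq, (hP u hu).eq, Matrix.mul_assoc,
      Matrix.neg_mul, Matrix.mul_neg]
    abel
  exact hI.is_const_of_deriv_eq_zero hIc
    (fun u hu => (hW u hu).differentiableAt.differentiableWithinAt) (fun u hu => (hW u hu).deriv)
    hs hs₀

noncomputable def hamiltonianCLM (C P : Matrix m m ℂ) :
    Matrix m m ℂ × Matrix m m ℂ →L[ℝ] Matrix m m ℂ × Matrix m m ℂ :=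
  ((matrixMulCLM m ℂ C).comp (ContinuousLinearMap.snd ℝ _ _)).prod
    ((matrixMulCLM m ℂ (-P)).comp (ContinuousLinearMap.fst ℝ _ _))

variable [DecidableEq m]

theorem exists_hasDerivAt_hamiltonian {P : ℝ → Matrix m m ℂ} (hI : IsOpen I)
    (hIc : I.OrdConnected) (hP : ContinuousOn P I) {s₀ : ℝ} (hs₀ : s₀ ∈ I) (H₀ : Matrix m m ℂ) :
    ∃ A B : ℝ → Matrix m m ℂ, A s₀ = 1 ∧ B s₀ = H₀ ∧
      ∀ s ∈ I, HasDerivAt A (C * B s) s ∧ HasDerivAt B (-P s * A s) s := by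
  have hM : ContinuousOn (fun s => hamiltonianCLM C (P s)) I :=
    continuousOn_clm_apply.2 fun p =>
      continuousOn_const.prodMk (by fun_prop : ContinuousOn (fun s => -P s * p.1) I)
  obtain ⟨Y, hY₀, hY⟩ := exists_isLinearSolOn hI hIc hM hs₀ (1, H₀)
  refine ⟨fun s => (Y s).1, fun s => (Y s).2, congrArg Prod.fst hY₀, congrArg Prod.snd hY₀,
    fun s hs => ?_⟩
  have hA := (ContinuousLinearMap.fst ℝ (Matrix m m ℂ) (Matrix m m ℂ)).hasFDerivAt.comp_hasDerivAt
    s (hY s hs)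
  have hB := (ContinuousLinearMap.snd ℝ (Matrix m m ℂ) (Matrix m m ℂ)).hasFDerivAt.comp_hasDerivAt
    s (hY s hs)
  exact ⟨hA, hB⟩

theorem isRiccatiSolOn_mul_inv {A B : ℝ → Matrix m m ℂ}
    (hAB : ∀ s ∈ I, HasDerivAt A (C * B s) s ∧
      HasDerivAt B (-(D s).map (fun x => (x : ℂ)) * A s) s)
    (hA : ∀ s ∈ I, IsUnit (A s).det) : IsRiccatiSolOn C D I (fun s => B s * (A s)⁻¹) :=
  fun s hs => ((hAB s hs).2.matrix_mul ((hAB s hs).1.matrix_inv (hA s hs))).congr_deriv <| by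
    simp [Matrix.mul_assoc, mul_nonsing_inv _ (hA s hs)]

theorem exists_isRiccatiSolOn (hI : IsOpen I) (hIc : I.OrdConnected) (hCh : C.IsHermitian)
    (hCs : C.IsSymm) (hD : ContinuousOn D I) (hDs : ∀ s ∈ I, (D s).IsSymm) {s₀ : ℝ}
    (hs₀ : s₀ ∈ I) {H₀ : Matrix m m ℂ} (hH₀ : H₀.IsSymm) (hpos : (H₀.map Complex.im).PosDef) :
    ∃ H, H s₀ = H₀ ∧ IsRiccatiSolOn C D I H ∧
      ∀ s ∈ I, (H s).IsSymm ∧ ((H s).map Complex.im).PosDef := by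
  obtain ⟨A, B, hA₀, hB₀, hAB⟩ := exists_hasDerivAt_hamiltonian (C := C) hI hIc
    (P := fun s => (D s).map (fun x => (x : ℂ))) (by fun_prop) hs₀ H₀
  have hW : ∀ s ∈ I,
      (A s)ᴴ * B s - (B s)ᴴ * A s = (2 * Complex.I) • (H₀.map Complex.im).map (↑) :=
    fun s hs => by
      rw [conjTranspose_mul_sub_eq_of_hamiltonian hI hIc.isPreconnected hCh
        (fun u hu => isHermitian_map_ofReal_iff.2 (hDs u hu)) hAB hs hs₀, hA₀, hB₀,
        conjTranspose_one, Matrix.one_mul, Matrix.mul_one, ← sub_conjTranspose_of_isSymm hH₀]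
  have hdet : ∀ s ∈ I, IsUnit (A s).det := fun s hs =>
    isUnit_det_of_conjTranspose_mul_sub (hW s hs) (by simp) (posDef_map_ofReal_iff.2 hpos)
  have hH := isRiccatiSolOn_mul_inv hAB hdet
  have hH₀' : B s₀ * (A s₀)⁻¹ = H₀ := by simp [hA₀, hB₀]
  have hsymm : ∀ s ∈ I, (B s * (A s)⁻¹).IsSymm := fun s hs =>
    (hH.transpose hCs hDs).eqOn hI hIc.isPreconnected hH hs₀ (by simp only [hH₀', hH₀.eq]) hs
  exact ⟨_, hH₀', hH, fun s hs =>
    ⟨hsymm s hs, posDef_map_im_mul_inv (hdet s hs) (hsymm s hs) (hW s hs) hpos⟩⟩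

end Riccati

lemma riccatiC_isSymm (n : ℕ) : (riccatiC n).IsSymm := by
  ext i j
  by_cases h : i = j
  · subst h; rfl
  · simp [riccatiC, h, Ne.symm h]

lemma riccatiC_isHermitian (n : ℕ) : (riccatiC n).IsHermitian := by
  ext i j
  by_cases h : i = j
  · subst h; simp only [conjTranspose_apply, riccatiC, of_apply]; split_ifs <;> simp
  · simp [riccatiC, h, Ne.symm h]

theorem riccati_existence_uniqueness_general
    (n : ℕ) (I : Set ℝ) (hIopen : IsOpen I) (hIconn : I.OrdConnected)
    (D : ℝ → Matrix (Fin n) (Fin n) ℝ) (hDcont : ContinuousOn D I)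
    (hDsymm : ∀ s ∈ I, (D s).IsSymm)
    (s₀ : ℝ) (hs₀ : s₀ ∈ I)
    (H₀ : Matrix (Fin n) (Fin n) ℂ) (hH₀symm : H₀.IsSymm)
    (hH₀pos : (H₀.map Complex.im).PosDef) :
    (∃ H : ℝ → Matrix (Fin n) (Fin n) ℂ, H s₀ = H₀ ∧ IsRiccatiSol n I D H ∧
      ∀ s ∈ I, (H s).IsSymm ∧ ((H s).map Complex.im).PosDef) ∧
    (∀ H₁ H₂ : ℝ → Matrix (Fin n) (Fin n) ℂ,
      H₁ s₀ = H₀ → IsRiccatiSol n I D H₁ →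
      H₂ s₀ = H₀ → IsRiccatiSol n I D H₂ →
      Set.EqOn H₁ H₂ I) :=
  ⟨exists_isRiccatiSolOn hIopen hIconn (riccatiC_isHermitian n) (riccatiC_isSymm n) hDcont
      hDsymm hs₀ hH₀symm hH₀pos,
    fun _ _ h₁ hsol₁ h₂ hsol₂ =>
      IsRiccatiSolOn.eqOn hIopen hIconn.isPreconnected hsol₁ hsol₂ hs₀ (h₁.trans h₂.symm)⟩

/-- The Riccati equation `H' + HCH + D = 0` on an open interval `I`,
with symmetric initial value `H₀` at `ŝ₀ ∈ I` whose imaginary part is positive definite,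
has exactly one differentiable solution; moreover this solution is symmetric with
positive definite imaginary part at every point of `I`. -/
theorem riccati_existence_uniqueness
    (n : ℕ) (hn : 1 ≤ n) (I : Set ℝ) (hIopen : IsOpen I) (hIconn : I.OrdConnected)
    (D : ℝ → Matrix (Fin n) (Fin n) ℝ) (hDcont : ContinuousOn D I)
    (hDsymm : ∀ s ∈ I, (D s).IsSymm)
    (s₀ : ℝ) (hs₀ : s₀ ∈ I)
    (H₀ : Matrix (Fin n) (Fin n) ℂ) (hH₀symm : H₀.IsSymm)
    (hH₀pos : (H₀.map Complex.im).PosDef) :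
    (∃ H : ℝ → Matrix (Fin n) (Fin n) ℂ, H s₀ = H₀ ∧ IsRiccatiSol n I D H ∧
      ∀ s ∈ I, (H s).IsSymm ∧ ((H s).map Complex.im).PosDef) ∧
    (∀ H₁ H₂ : ℝ → Matrix (Fin n) (Fin n) ℂ,
      H₁ s₀ = H₀ → IsRiccatiSol n I D H₁ →
      H₂ s₀ = H₀ → IsRiccatiSol n I D H₂ →
      Set.EqOn H₁ H₂ I) :=
  riccati_existence_uniqueness_general n I hIopen hIconn D hDcont hDsymm s₀ hs₀ H₀ hH₀symm hH₀pos
end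

section
/- Let n ≥ 2 and let ξ₀, ξ₁, ξ₂ ∈ ℝ^{1+n} be lightlike vectors. If ξ₀ lies in the real linear span of ξ₁ and ξ₂, then ξ₀ is a real scalar multiple of ξ₁ or ξ₀ is a real scalar multiple of ξ₂. -/
/-!
Polarizing the null condition on `ξ₀ = a • ξ₁ + b • ξ₂` leaves `a * b * B(ξ₁, ξ₂) = 0`, where `B`
is the Minkowski bilinear form. If `a` or `b` vanishes we are done. Otherwise `ξ₁` and `ξ₂` are
orthogonal null vectors; subtracting the multiple of `ξ₁` with the same time component from `ξ₂`
gives a null vector with zero time component, which must vanish since the spatial part of `q` is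
positive definite. Hence `ξ₂` is a multiple of `ξ₁`, and so is `ξ₀`.
-/

/-- The Minkowski quadratic form `q(v) = -(v⁰)² + Σ_{i=1}^n (vⁱ)²` on `ℝ^{1+n}`. -/
def minkQ (n : ℕ) (v : Fin (n + 1) → ℝ) : ℝ :=
  -(v 0) ^ 2 + ∑ i : Fin n, (v i.succ) ^ 2

/-- A vector of `ℝ^{1+n}` is lightlike if it is nonzero and null for the
Minkowski quadratic form. -/
def IsLightlike (n : ℕ) (v : Fin (n + 1) → ℝ) : Prop :=
  v ≠ 0 ∧ minkQ n v = 0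

def minkB (n : ℕ) (u v : Fin (n + 1) → ℝ) : ℝ :=
  -(u 0 * v 0) + ∑ i : Fin n, u i.succ * v i.succ

lemma minkB_comm (n : ℕ) (u v : Fin (n + 1) → ℝ) : minkB n u v = minkB n v u := by
  simp only [minkB, mul_comm]

lemma minkQ_smul_add_smul (n : ℕ) (a b : ℝ) (u v : Fin (n + 1) → ℝ) :
    minkQ n (a • u + b • v) =
      a ^ 2 * minkQ n u + 2 * a * b * minkB n u v + b ^ 2 * minkQ n v := by
  have expand : ∀ i : Fin n, (a * u i.succ + b * v i.succ) ^ 2 =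
      a ^ 2 * u i.succ ^ 2 + 2 * a * b * (u i.succ * v i.succ) + b ^ 2 * v i.succ ^ 2 :=
    fun i => by ring
  simp only [minkQ, minkB, Pi.add_apply, Pi.smul_apply, smul_eq_mul, expand,
    Finset.sum_add_distrib, ← Finset.mul_sum]
  ring

lemma mul_mul_minkB_eq_zero_of_minkQ_eq_zero {n : ℕ} {a b : ℝ} {u v : Fin (n + 1) → ℝ}
    (hu : minkQ n u = 0) (hv : minkQ n v = 0) (h : minkQ n (a • u + b • v) = 0) :
    a * b * minkB n u v = 0 := by
  rw [minkQ_smul_add_smul, hu, hv] at h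
  linarith

lemma eq_zero_of_minkQ_eq_zero_of_apply_zero {n : ℕ} {u : Fin (n + 1) → ℝ}
    (hq : minkQ n u = 0) (h0 : u 0 = 0) : u = 0 := by
  have hsum : ∑ i : Fin n, u i.succ ^ 2 = 0 := by simpa [minkQ, h0] using hq
  have hspatial := (Finset.sum_eq_zero_iff_of_nonneg fun i _ => sq_nonneg (u i.succ)).1 hsum
  funext j
  refine Fin.cases h0 (fun i => ?_) j
  exact pow_eq_zero_iff two_ne_zero |>.1 (hspatial i (Finset.mem_univ i))

lemma IsLightlike.apply_zero_ne_zero {n : ℕ} {u : Fin (n + 1) → ℝ} (hu : IsLightlike n u) :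
    u 0 ≠ 0 :=
  fun h => hu.1 (eq_zero_of_minkQ_eq_zero_of_apply_zero hu.2 h)

lemma IsLightlike.eq_smul_of_minkB_eq_zero {n : ℕ} {u v : Fin (n + 1) → ℝ}
    (hu : IsLightlike n u) (hv : minkQ n v = 0) (hB : minkB n u v = 0) :
    ∃ c : ℝ, v = c • u := by
  set c := v 0 / u 0
  have hnull : minkQ n ((1 : ℝ) • v + (-c) • u) = 0 := by
    rw [minkQ_smul_add_smul, minkB_comm, hB, hu.2, hv]
    ring
  have htime : ((1 : ℝ) • v + (-c) • u) 0 = 0 := by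
    simp only [Pi.add_apply, Pi.smul_apply, smul_eq_mul, c]
    field_simp [hu.apply_zero_ne_zero]
    ring
  refine ⟨c, ?_⟩
  have := eq_zero_of_minkQ_eq_zero_of_apply_zero hnull htime
  rwa [one_smul, neg_smul, ← sub_eq_add_neg, sub_eq_zero] at this

theorem lightlike_mem_span_pair_general
    (n : ℕ) (ξ₀ ξ₁ ξ₂ : Fin (n + 1) → ℝ)
    (h₀ : IsLightlike n ξ₀) (h₁ : IsLightlike n ξ₁) (h₂ : IsLightlike n ξ₂)
    (hspan : ξ₀ ∈ Submodule.span ℝ ({ξ₁, ξ₂} : Set (Fin (n + 1) → ℝ))) :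
    (∃ c : ℝ, ξ₀ = c • ξ₁) ∨ (∃ c : ℝ, ξ₀ = c • ξ₂) := by
  obtain ⟨a, b, rfl⟩ := Submodule.mem_span_pair.1 hspan
  rcases mul_eq_zero.1 (mul_mul_minkB_eq_zero_of_minkQ_eq_zero h₁.2 h₂.2 h₀.2) with hab | hB
  · rcases mul_eq_zero.1 hab with rfl | rfl
    · exact Or.inr ⟨b, by simp⟩
    · exact Or.inl ⟨a, by simp⟩
  · obtain ⟨c, rfl⟩ := h₁.eq_smul_of_minkB_eq_zero h₂.2 hB
    exact Or.inl ⟨a + b * c, by rw [smul_smul, ← add_smul]⟩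

/-- If a lightlike vector `ξ₀` in `ℝ^{1+n}` (`n ≥ 2`) lies in the
real linear span of two lightlike vectors `ξ₁, ξ₂`, then it is a real scalar
multiple of `ξ₁` or of `ξ₂`. -/
theorem lightlike_mem_span_pair
    (n : ℕ) (hn : 2 ≤ n) (ξ₀ ξ₁ ξ₂ : Fin (n + 1) → ℝ)
    (h₀ : IsLightlike n ξ₀) (h₁ : IsLightlike n ξ₁) (h₂ : IsLightlike n ξ₂)
    (hspan : ξ₀ ∈ Submodule.span ℝ ({ξ₁, ξ₂} : Set (Fin (n + 1) → ℝ))) :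
    (∃ c : ℝ, ξ₀ = c • ξ₁) ∨ (∃ c : ℝ, ξ₀ = c • ξ₂) :=
  lightlike_mem_span_pair_general n ξ₀ ξ₁ ξ₂ h₀ h₁ h₂ hspan
end

section
/- Let d ≥ 1, let U ⊆ ℝ^d be an open bounded set containing 0, let c > 0, and let S : U → ℂ be continuous with Im S(x) ≥ c‖x‖² for all x ∈ U. Let F : ℝ^d → ℂ be a Lipschitz function whose (compact) support is contained in U. Then there exists a constant A > 0 such that for all λ ≥ 1, |∫_U (F(x) − F(0)) e^{iλS(x)} dx| ≤ A λ^{−(d+1)/2}. -/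
open MeasureTheory

/-!
On `U` the integrand is dominated by `K ‖x‖ e^{-λ c ‖x‖²}`, where `K` is a Lipschitz constant of
`F`: the factor `‖x‖` comes from `F x - F 0`, the Gaussian from `Im S ≥ c ‖x‖²`. Enlarging the
domain to all of `ℝ^d` and substituting `x = y / √λ` turns this majorant into
`λ^{-(d+1)/2} K ∫ ‖y‖ e^{-c ‖y‖²} dy`, one power `λ^{-1/2}` from `‖x‖` and `λ^{-d/2}` from the
Jacobian; the last integral is finite because `‖y‖ e^{-c ‖y‖² / 2}` is bounded.
-/

open Real Complex Module

theorem norm_cexp_I_mul_ofReal_mul (lam : ℝ) (z : ℂ) :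
    ‖cexp (I * lam * z)‖ = rexp (-(lam * z.im)) := by
  simp [Complex.norm_exp, mul_comm I, mul_assoc]

theorem le_mul_rexp_mul_sq {a : ℝ} (ha : 0 < a) (t : ℝ) :
    t ≤ (1 + (4 * a)⁻¹) * rexp (a * t ^ 2) := by
  have hamgm : t ≤ (4 * a)⁻¹ + a * t ^ 2 := by
    have hsq : (4 * a)⁻¹ + a * t ^ 2 - t = (2 * a * t - 1) ^ 2 / (4 * a) := by
      field_simp; ring
    rw [← sub_nonneg, hsq]; positivity
  have hq : 0 ≤ (4 * a)⁻¹ := by positivity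
  calc t ≤ (4 * a)⁻¹ + a * t ^ 2 := hamgm
    _ ≤ (1 + (4 * a)⁻¹) * (a * t ^ 2 + 1) := by
      nlinarith [mul_nonneg hq (mul_nonneg ha.le (sq_nonneg t))]
    _ ≤ (1 + (4 * a)⁻¹) * rexp (a * t ^ 2) := by gcongr; exact add_one_le_exp _

theorem integral_norm_mul_rexp_neg_mul_sq_norm_scale {E : Type*} [NormedAddCommGroup E]
    [NormedSpace ℝ E] [FiniteDimensional ℝ E] [MeasurableSpace E] [BorelSpace E]
    (μ : Measure E) [μ.IsAddHaarMeasure] {lam : ℝ} (hlam : 0 < lam) (b : ℝ) :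
    ∫ x, ‖x‖ * rexp (-(lam * b) * ‖x‖ ^ 2) ∂μ =
      lam ^ (-((finrank ℝ E + 1 : ℝ) / 2)) * ∫ x, ‖x‖ * rexp (-b * ‖x‖ ^ 2) ∂μ := by
  set r := √lam
  have hr : 0 < r := sqrt_pos.2 hlam
  have hcomp : ∀ x : E, ‖r • x‖ * rexp (-b * ‖r • x‖ ^ 2) =
      r * (‖x‖ * rexp (-(lam * b) * ‖x‖ ^ 2)) := fun x => by
    rw [norm_smul, norm_of_nonneg hr.le, mul_pow, sq_sqrt hlam.le]; ring_nf
  have hscale := Measure.integral_comp_smul_of_nonneg μ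
    (fun x : E => ‖x‖ * rexp (-b * ‖x‖ ^ 2)) r (hR := hr.le)
  simp only [hcomp, integral_const_mul, smul_eq_mul] at hscale
  rw [rpow_neg hlam.le, rpow_div_two_eq_sqrt _ hlam.le, ← Nat.cast_succ, rpow_natCast,
    pow_succ, mul_inv, mul_assoc, mul_left_comm, ← hscale, inv_mul_cancel_left₀ hr.ne']

section InnerProductSpace

variable {V : Type*} [NormedAddCommGroup V] [InnerProductSpace ℝ V] [FiniteDimensional ℝ V]
  [MeasurableSpace V] [BorelSpace V]

theorem integrable_rexp_neg_mul_sq_norm {b : ℝ} (hb : 0 < b) :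
    Integrable fun x : V => rexp (-b * ‖x‖ ^ 2) := by
  refine (GaussianFourier.integrable_cexp_neg_mul_sq_norm_add (V := V) (b := b)
    (by simpa using hb) 0 0).norm.congr (.of_forall fun x => ?_)
  simp [Complex.norm_exp, ← ofReal_pow, ← ofReal_mul]

theorem integrable_norm_mul_rexp_neg_mul_sq_norm {b : ℝ} (hb : 0 < b) :
    Integrable fun x : V => ‖x‖ * rexp (-b * ‖x‖ ^ 2) := by
  refine ((integrable_rexp_neg_mul_sq_norm (V := V) (half_pos hb)).const_mul
    (1 + (4 * (b / 2))⁻¹)).mono' (by fun_prop) (.of_forall fun x => ?_)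
  have hsplit : rexp (-b * ‖x‖ ^ 2) =
      rexp (-(b / 2) * ‖x‖ ^ 2) * rexp (-(b / 2) * ‖x‖ ^ 2) := by
    rw [← Real.exp_add]; ring_nf
  rw [norm_of_nonneg (by positivity), hsplit, ← mul_assoc]
  gcongr
  calc ‖x‖ * rexp (-(b / 2) * ‖x‖ ^ 2)
      ≤ (1 + (4 * (b / 2))⁻¹) * rexp (b / 2 * ‖x‖ ^ 2) * rexp (-(b / 2) * ‖x‖ ^ 2) := by
        gcongr; exact le_mul_rexp_mul_sq (half_pos hb) ‖x‖
    _ = 1 + (4 * (b / 2))⁻¹ := by rw [mul_assoc, ← Real.exp_add]; simp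

theorem norm_setIntegral_sub_mul_cexp_le {U : Set V} (hU : MeasurableSet U) {c : ℝ}
    (hc : 0 < c) {S : V → ℂ} (hS : ∀ x ∈ U, c * ‖x‖ ^ 2 ≤ (S x).im) {F : V → ℂ} {K : NNReal}
    (hF : LipschitzWith K F) {lam : ℝ} (hlam : 0 < lam) :
    ‖∫ x in U, (F x - F 0) * cexp (I * lam * S x)‖ ≤
      K * (∫ x : V, ‖x‖ * rexp (-c * ‖x‖ ^ 2)) * lam ^ (-((finrank ℝ V + 1 : ℝ) / 2)) := by
  set h : V → ℝ := fun x => K * (‖x‖ * rexp (-(lam * c) * ‖x‖ ^ 2))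
  have hint : Integrable h :=
    (integrable_norm_mul_rexp_neg_mul_sq_norm (mul_pos hlam hc)).const_mul _
  have hdom : ∀ x ∈ U, ‖(F x - F 0) * cexp (I * lam * S x)‖ ≤ h x := fun x hx => by
    have hLip : ‖F x - F 0‖ ≤ K * ‖x‖ := by simpa [dist_eq_norm] using hF.dist_le_mul x 0
    have hdecay : rexp (-(lam * (S x).im)) ≤ rexp (-(lam * c) * ‖x‖ ^ 2) :=
      exp_le_exp.2 (by nlinarith [hS x hx])
    rw [norm_mul, norm_cexp_I_mul_ofReal_mul]
    calc _ ≤ K * ‖x‖ * rexp (-(lam * c) * ‖x‖ ^ 2) := by gcongr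
      _ = h x := mul_assoc _ _ _
  calc _ ≤ ∫ x in U, h x :=
        norm_integral_le_of_norm_le hint.integrableOn (ae_restrict_of_forall_mem hU hdom)
    _ ≤ ∫ x, h x := setIntegral_le_integral hint (.of_forall fun x => by positivity)
    _ = _ := by
      rw [integral_const_mul, integral_norm_mul_rexp_neg_mul_sq_norm_scale volume hlam]
      ring

end InnerProductSpace

theorem integral_sub_exp_phase_decay_general
    (d : ℕ) (U : Set (EuclideanSpace ℝ (Fin d)))
    (hUopen : IsOpen U)
    (c : ℝ) (hc : 0 < c)
    (S : EuclideanSpace ℝ (Fin d) → ℂ)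
    (hSim : ∀ x ∈ U, c * ‖x‖ ^ 2 ≤ (S x).im)
    (F : EuclideanSpace ℝ (Fin d) → ℂ)
    (hFlip : ∃ K : NNReal, LipschitzWith K F) :
    ∃ A : ℝ, 0 < A ∧ ∀ lam : ℝ, 1 ≤ lam →
      ‖∫ x in U, (F x - F 0) * Complex.exp (Complex.I * lam * S x)‖ ≤
        A * lam ^ (-(((d : ℝ) + 1) / 2)) := by
  obtain ⟨K, hK⟩ := hFlip
  refine ⟨K * (∫ x : EuclideanSpace ℝ (Fin d), ‖x‖ * rexp (-c * ‖x‖ ^ 2)) + 1, by positivity,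
    fun lam hlam => ?_⟩
  have hlam0 : 0 < lam := by linarith
  calc _ ≤ _ := norm_setIntegral_sub_mul_cexp_le hUopen.measurableSet hc hSim hK hlam0
    _ ≤ _ := by rw [finrank_euclideanSpace_fin]; gcongr; linarith

/-- Let `U ⊆ ℝ^d` be open and bounded with `0 ∈ U`, let `c > 0`, let
`S : U → ℂ` be continuous with `Im S(x) ≥ c ‖x‖²` on `U`, and let `F : ℝ^d → ℂ` be a
Lipschitz function whose support is contained in `U`. Then there exists `A > 0` such
that for all `λ ≥ 1`, `|∫_U (F(x) - F(0)) e^{iλ S(x)} dx| ≤ A λ^{-(d+1)/2}`. -/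
theorem integral_sub_exp_phase_decay
    (d : ℕ) (hd : 1 ≤ d) (U : Set (EuclideanSpace ℝ (Fin d)))
    (hUopen : IsOpen U) (hUbdd : Bornology.IsBounded U)
    (h0U : (0 : EuclideanSpace ℝ (Fin d)) ∈ U)
    (c : ℝ) (hc : 0 < c)
    (S : EuclideanSpace ℝ (Fin d) → ℂ) (hScont : ContinuousOn S U)
    (hSim : ∀ x ∈ U, c * ‖x‖ ^ 2 ≤ (S x).im)
    (F : EuclideanSpace ℝ (Fin d) → ℂ)
    (hFlip : ∃ K : NNReal, LipschitzWith K F)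
    (hFsupp : tsupport F ⊆ U) :
    ∃ A : ℝ, 0 < A ∧ ∀ lam : ℝ, 1 ≤ lam →
      ‖∫ x in U, (F x - F 0) * Complex.exp (Complex.I * lam * S x)‖ ≤
        A * lam ^ (-(((d : ℝ) + 1) / 2)) :=
  integral_sub_exp_phase_decay_general d U hUopen c hc S hSim F hFlip
end
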